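/- Let A and B = A + E be (d+1)×(d+1) complex Hermitian matrices with λ_m(A) > λ_{m+1}(A), λ_m(B) > λ_{m+1}(B), and λ_m(B) > λ_{m+1}(A). Then (λ_m(B) − λ_{m+1}(A)) · ‖π_m(A) − π_m(B)‖_F ≤ √2 · ‖E‖_F. -/

import Mathlib

/-- The eigenvalues of a Hermitian complex matrix in decreasing order (with multiplicity);
junk value `0` for non-Hermitian matrices. -/
noncomputable def eigD {n : ℕ} (A : Matrix (Fin n) (Fin n) ℂ) : Fin n → ℝ :=
  if h : A.IsHermitian then fun i => h.eigenvalues (Tuple.sort h.eigenvalues i.rev) else 0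

/-- The Frobenius norm of a complex matrix. -/
noncomputable def frobNorm {n : ℕ} (A : Matrix (Fin n) (Fin n) ℂ) : ℝ :=
  Real.sqrt (∑ i, ∑ j, ‖A i j‖ ^ 2)

/-- The top-`m` spectral projection of a Hermitian matrix (the orthogonal projection onto
the span of eigenvectors for the `m` largest eigenvalues), scaled by `1/√m` (the extrinsic
projection `π_m` onto the Veronese–Whitney embedded Grassmannian); junk value `0` in
degenerate cases. -/
noncomputable def piGr {n : ℕ} (m : ℕ) (A : Matrix (Fin n) (Fin n) ℂ) :
    Matrix (Fin n) (Fin n) ℂ :=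
  if h : A.IsHermitian ∧ m - 1 < n then
    (Real.sqrt m)⁻¹ •
      ((h.1.eigenvectorUnitary : Matrix (Fin n) (Fin n) ℂ) *
        Matrix.diagonal (fun i => if eigD A ⟨m - 1, h.2⟩ ≤ h.1.eigenvalues i then (1 : ℂ) else 0) *
        star (h.1.eigenvectorUnitary : Matrix (Fin n) (Fin n) ℂ))
  else 0


open Finset in
lemma dk_key {n : ℕ} (w : Fin n → Fin n → ℝ) (hw : ∀ i j, 0 ≤ w i j)
    (hrow : ∀ i, ∑ j, w i j = 1) (hcol : ∀ j, ∑ i, w i j = 1)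
    (a b : Fin n → ℝ) (SA TB : Fin n → Prop) [DecidablePred SA] [DecidablePred TB]
    (hcard : (univ.filter SA).card = (univ.filter TB).card)
    (δ : ℝ) (hδ : 0 ≤ δ)
    (hgap : ∀ i j, ¬ SA i → TB j → δ ≤ b j - a i) :
    δ^2 * ∑ i, ∑ j, ((if SA i then (1:ℝ) else 0) - (if TB j then 1 else 0))^2 * w i j
      ≤ 2 * ∑ i, ∑ j, (b j - a i)^2 * w i j := by
  set X : ℝ := ∑ i, ∑ j, (if SA i then (if TB j then w i j else 0) else 0) with hX
  have h1 : (∑ i, ∑ j, (if SA i then (if TB j then (0:ℝ) else w i j) else 0))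
      = (univ.filter SA).card - X := by
    have key : ∀ i j, (if SA i then (if TB j then (0:ℝ) else w i j) else 0)
        = (if SA i then w i j else 0) - (if SA i then (if TB j then w i j else 0) else 0) := by
      intro i j; by_cases h1 : SA i <;> by_cases h2 : TB j <;> simp [h1, h2]
    simp only [key, Finset.sum_sub_distrib, hX]
    congr 1
    have h3 : ∀ i, (∑ j, if SA i then w i j else 0) = (if SA i then (1:ℝ) else 0) := by
      intro i; by_cases h : SA i <;> simp [h, hrow i]
    rw [Finset.sum_congr rfl fun i _ => h3 i]
    simp [Finset.sum_boole]
  have h2 : (∑ i, ∑ j, (if ¬ SA i then (if TB j then w i j else 0) else 0))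
      = (univ.filter TB).card - X := by
    have key : ∀ i j, (if ¬ SA i then (if TB j then w i j else 0) else 0)
        = (if TB j then w i j else 0) - (if SA i then (if TB j then w i j else 0) else 0) := by
      intro i j; by_cases h1 : SA i <;> by_cases h2 : TB j <;> simp [h1, h2]
    simp only [key, Finset.sum_sub_distrib, hX]
    congr 1
    rw [Finset.sum_comm]
    have h3 : ∀ j, (∑ i, if TB j then w i j else 0) = (if TB j then (1:ℝ) else 0) := by
      intro j; by_cases h : TB j <;> simp [h, hcol j]
    rw [Finset.sum_congr rfl fun j _ => h3 j]
    simp [Finset.sum_boole]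
  have hsplit : (∑ i, ∑ j, ((if SA i then (1:ℝ) else 0) - (if TB j then 1 else 0))^2 * w i j)
      = 2 * ∑ i, ∑ j, (if ¬ SA i then (if TB j then w i j else 0) else 0) := by
    have key : ∀ i j, ((if SA i then (1:ℝ) else 0) - (if TB j then 1 else 0))^2 * w i j
        = (if SA i then (if TB j then (0:ℝ) else w i j) else 0)
          + (if ¬ SA i then (if TB j then w i j else 0) else 0) := by
      intro i j; by_cases h1 : SA i <;> by_cases h2 : TB j <;> simp [h1, h2]
    simp only [key, Finset.sum_add_distrib, h1, h2, hcard]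
    ring
  rw [hsplit]
  have hterm : ∀ i j, δ^2 * (if ¬ SA i then (if TB j then w i j else 0) else 0)
      ≤ (b j - a i)^2 * w i j := by
    intro i j
    by_cases h1 : SA i
    · simp only [h1, not_true_eq_false, if_false, mul_zero]
      exact mul_nonneg (sq_nonneg _) (hw i j)
    · by_cases h2 : TB j
      · simp only [h1, h2, not_false_eq_true, if_true]
        exact mul_le_mul_of_nonneg_right
          (pow_le_pow_left₀ hδ (le_sub_iff_add_le.mpr (by linarith [hgap i j h1 h2])) 2) (hw i j)
      · simp only [h1, h2, not_false_eq_true, if_true, if_false, mul_zero]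
        exact mul_nonneg (sq_nonneg _) (hw i j)
  calc δ^2 * (2 * ∑ i, ∑ j, (if ¬ SA i then (if TB j then w i j else 0) else 0))
      = 2 * ∑ i, ∑ j, δ^2 * (if ¬ SA i then (if TB j then w i j else 0) else 0) := by
        rw [mul_left_comm]; simp_rw [Finset.mul_sum]
    _ ≤ 2 * ∑ i, ∑ j, (b j - a i)^2 * w i j := by
        refine mul_le_mul_of_nonneg_left ?_ (by norm_num)
        exact Finset.sum_le_sum fun i _ => Finset.sum_le_sum fun j _ => hterm i j

open Finset in
lemma sort_facts {n : ℕ} (f : Fin n → ℝ) (m : ℕ) (hm : 1 ≤ m) (hmd : m < n)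
    (hgap : f (Tuple.sort f (Fin.rev ⟨m, hmd⟩)) < f (Tuple.sort f (Fin.rev ⟨m - 1, by omega⟩))) :
    (univ.filter (fun i => f (Tuple.sort f (Fin.rev ⟨m - 1, by omega⟩)) ≤ f i)).card = m
    ∧ ∀ i, ¬ (f (Tuple.sort f (Fin.rev ⟨m - 1, by omega⟩)) ≤ f i)
        → f i ≤ f (Tuple.sort f (Fin.rev ⟨m, hmd⟩)) := by
  set σ := Tuple.sort f with hσ
  have hmono : Monotone (f ∘ σ) := Tuple.monotone_sort f
  set r1 : Fin n := Fin.rev ⟨m - 1, by omega⟩ with hr1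
  set r0 : Fin n := Fin.rev ⟨m, hmd⟩ with hr0
  have hv1 : (r1 : ℕ) = n - m := by simp [hr1, Fin.val_rev]; omega
  have hv0 : (r0 : ℕ) = n - 1 - m := by simp [hr0, Fin.val_rev]; omega
  have hle : ∀ k : Fin n, ¬ r1 ≤ k → k ≤ r0 := by
    intro k hk
    rw [Fin.not_le, Fin.lt_def] at hk
    rw [Fin.le_def]
    omega
  have c1 : ∀ k : Fin n, (f (σ r1) ≤ f (σ k) ↔ r1 ≤ k) := by
    intro k
    constructor
    · intro h
      by_contra hk
      have h2 := hmono (hle k hk)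
      simp only [Function.comp] at h2
      have := lt_of_le_of_lt (le_trans h h2) hgap
      exact lt_irrefl _ this
    · intro h; exact hmono h
  constructor
  · have himg : univ.filter (fun i => f (σ r1) ≤ f i)
        = Finset.image σ (univ.filter fun k => f (σ r1) ≤ f (σ k)) := by
      ext i
      simp only [Finset.mem_filter, Finset.mem_univ, true_and, Finset.mem_image]
      constructor
      · intro h; exact ⟨σ.symm i, by simpa using h, by simp⟩
      · rintro ⟨k, hk, rfl⟩; exact hk
    rw [himg, Finset.card_image_of_injective _ σ.injective]
    have : (univ.filter fun k => f (σ r1) ≤ f (σ k)) = Finset.Ici r1 := by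
      ext k
      simp [c1 k, Finset.mem_Ici]
    rw [this, Fin.card_Ici]
    omega
  · intro i hi
    have hk : ¬ r1 ≤ σ.symm i := by
      intro h
      exact hi (by simpa using c1 (σ.symm i) |>.mpr h)
    have := hmono (hle _ hk)
    simpa using this

open Matrix in
lemma sumSq_eq_trace {n : ℕ} (M : Matrix (Fin n) (Fin n) ℂ) :
    ∑ i, ∑ j, ‖M i j‖^2 = (Matrix.trace (star M * M)).re := by
  rw [Finset.sum_comm]
  simp only [Matrix.trace, Matrix.diag, Matrix.mul_apply, Matrix.star_apply,
    RCLike.star_def]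
  rw [Complex.re_sum]
  congr 1; ext j
  rw [Complex.re_sum]
  congr 1; ext i
  rw [RCLike.conj_mul]
  simp [← Complex.ofReal_pow]

open Matrix in
lemma sumSq_conj {n : ℕ} (U V : Matrix.unitaryGroup (Fin n) ℂ)
    (M : Matrix (Fin n) (Fin n) ℂ) :
    ∑ i, ∑ j, ‖(star (U : Matrix (Fin n) (Fin n) ℂ) * M * (V : Matrix (Fin n) (Fin n) ℂ)) i j‖^2
      = ∑ i, ∑ j, ‖M i j‖^2 := by
  set Uc := (U : Matrix (Fin n) (Fin n) ℂ)
  set Vc := (V : Matrix (Fin n) (Fin n) ℂ)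
  have h1 : Uc * star Uc = 1 := Matrix.mem_unitaryGroup_iff.mp U.2
  have h2 : Vc * star Vc = 1 := Matrix.mem_unitaryGroup_iff.mp V.2
  rw [sumSq_eq_trace, sumSq_eq_trace]
  congr 1
  have key : star (star Uc * M * Vc) * (star Uc * M * Vc) = star Vc * (star M * M) * Vc := by
    simp only [StarMul.star_mul, star_star, Matrix.mul_assoc]
    rw [← Matrix.mul_assoc Uc (star Uc) (M * Vc), h1, Matrix.one_mul]
  rw [key, Matrix.trace_mul_comm, ← Matrix.mul_assoc, ← Matrix.mul_assoc, h2, Matrix.one_mul]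

open Matrix in
lemma row_sum_one {n : ℕ} (C : Matrix (Fin n) (Fin n) ℂ) (h : C * star C = 1) (i : Fin n) :
    ∑ j, ‖C i j‖^2 = 1 := by
  have h1 := congrFun (congrFun h i) i
  simp only [Matrix.mul_apply, Matrix.star_apply, RCLike.star_def, Matrix.one_apply_eq] at h1
  have h2 : ∀ j, C i j * (starRingEnd ℂ) (C i j) = ((‖C i j‖^2 : ℝ) : ℂ) := by
    intro j; rw [RCLike.mul_conj]; simp
  rw [Finset.sum_congr rfl fun j _ => h2 j] at h1
  exact_mod_cast h1

open Matrix in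
lemma col_sum_one {n : ℕ} (C : Matrix (Fin n) (Fin n) ℂ) (h : star C * C = 1) (j : Fin n) :
    ∑ i, ‖C i j‖^2 = 1 := by
  have h1 := congrFun (congrFun h j) j
  simp only [Matrix.mul_apply, Matrix.star_apply, RCLike.star_def, Matrix.one_apply_eq] at h1
  have h2 : ∀ i, (starRingEnd ℂ) (C i j) * C i j = ((‖C i j‖^2 : ℝ) : ℂ) := by
    intro i; rw [RCLike.conj_mul]; simp
  rw [Finset.sum_congr rfl fun i _ => h2 i] at h1
  exact_mod_cast h1

set_option maxHeartbeats 2000000 in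
/-- a Davis–Kahan `sin θ` type bound: for Hermitian `A` and `B = A + E`
with `λ_m(A) > λ_{m+1}(A)`, `λ_m(B) > λ_{m+1}(B)` and `λ_m(B) > λ_{m+1}(A)`,
`(λ_m(B) − λ_{m+1}(A)) · ‖π_m(A) − π_m(B)‖_F ≤ √2 · ‖E‖_F`. -/
theorem davis_kahan_grassmann
    {d m : ℕ} (hm : 1 ≤ m) (hmd : m < d + 1)
    (A E : Matrix (Fin (d + 1)) (Fin (d + 1)) ℂ)
    (hA : A.IsHermitian) (hE : E.IsHermitian)
    (hgapA : eigD A ⟨m, hmd⟩ < eigD A ⟨m - 1, by omega⟩)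
    (hgapB : eigD (A + E) ⟨m, hmd⟩ < eigD (A + E) ⟨m - 1, by omega⟩)
    (hcross : eigD A ⟨m, hmd⟩ < eigD (A + E) ⟨m - 1, by omega⟩) :
    (eigD (A + E) ⟨m - 1, by omega⟩ - eigD A ⟨m, hmd⟩)
        * frobNorm (piGr m A - piGr m (A + E))
      ≤ Real.sqrt 2 * frobNorm E := by
  have hmn : m - 1 < d + 1 := by omega
  have hB : (A + E).IsHermitian := hA.add hE
  set B := A + E with hBdef
  set α := hA.eigenvalues with hα
  set β := hB.eigenvalues with hβ
  set Uc := (hA.eigenvectorUnitary : Matrix (Fin (d+1)) (Fin (d+1)) ℂ) with hUc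
  set Vc := (hB.eigenvectorUnitary : Matrix (Fin (d+1)) (Fin (d+1)) ℂ) with hVc
  have hUsU : star Uc * Uc = 1 := Matrix.mem_unitaryGroup_iff'.mp hA.eigenvectorUnitary.2
  have hUUs : Uc * star Uc = 1 := Matrix.mem_unitaryGroup_iff.mp hA.eigenvectorUnitary.2
  have hVsV : star Vc * Vc = 1 := Matrix.mem_unitaryGroup_iff'.mp hB.eigenvectorUnitary.2
  have hVVs : Vc * star Vc = 1 := Matrix.mem_unitaryGroup_iff.mp hB.eigenvectorUnitary.2
  set C := star Uc * Vc with hC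
  have hCCs : C * star C = 1 := by
    rw [hC, StarMul.star_mul, star_star, Matrix.mul_assoc, ← Matrix.mul_assoc Vc (star Vc) Uc,
      hVVs, Matrix.one_mul, hUsU]
  have hCsC : star C * C = 1 := by
    rw [hC, StarMul.star_mul, star_star, Matrix.mul_assoc, ← Matrix.mul_assoc Uc (star Uc) Vc,
      hUUs, Matrix.one_mul, hVsV]
  set w : Fin (d+1) → Fin (d+1) → ℝ := fun i j => ‖C i j‖^2 with hw
  have hrow : ∀ i, ∑ j, w i j = 1 := row_sum_one C hCCs
  have hcol : ∀ j, ∑ i, w i j = 1 := col_sum_one C hCsC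
  -- unfolded eigD
  have hEA : ∀ (k : ℕ) (h : k < d + 1),
      eigD A ⟨k, h⟩ = α (Tuple.sort α (Fin.rev ⟨k, h⟩)) := by
    intro k h; rw [eigD, dif_pos hA]
  have hEB : ∀ (k : ℕ) (h : k < d + 1),
      eigD B ⟨k, h⟩ = β (Tuple.sort β (Fin.rev ⟨k, h⟩)) := by
    intro k h; rw [eigD, dif_pos hB]
  -- sort facts for A and B
  have hfA := sort_facts α m hm hmd (by rw [hEA m hmd, hEA (m-1) hmn] at hgapA; exact hgapA)
  have hfB := sort_facts β m hm hmd (by rw [hEB m hmd, hEB (m-1) hmn] at hgapB; exact hgapB)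
  -- projections
  set gA : Fin (d+1) → ℂ := fun i => if eigD A ⟨m - 1, hmn⟩ ≤ α i then 1 else 0 with hgA
  set gB : Fin (d+1) → ℂ := fun i => if eigD B ⟨m - 1, hmn⟩ ≤ β i then 1 else 0 with hgB
  set P := Uc * Matrix.diagonal gA * star Uc with hP
  set Q := Vc * Matrix.diagonal gB * star Vc with hQ
  have hπA : piGr m A = (Real.sqrt m)⁻¹ • P := by
    rw [piGr, dif_pos ⟨hA, hmn⟩]
  have hπB : piGr m B = (Real.sqrt m)⁻¹ • Q := by
    rw [piGr, dif_pos ⟨hB, hmn⟩]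
  have hdiff : piGr m A - piGr m B = (Real.sqrt m)⁻¹ • (P - Q) := by
    rw [hπA, hπB, smul_sub]
  -- conjugated matrices
  have h5 : star Uc * A * Vc = Matrix.diagonal (RCLike.ofReal ∘ α) * C := by
    conv_lhs => rw [hA.spectral_theorem, Unitary.conjStarAlgAut_apply]
    simp only [Matrix.mul_assoc, hC]
    rw [← Matrix.mul_assoc (star Uc) Uc, hUsU, Matrix.one_mul]
  have h6 : star Uc * B * Vc = C * Matrix.diagonal (RCLike.ofReal ∘ β) := by
    conv_lhs => rw [hB.spectral_theorem, Unitary.conjStarAlgAut_apply]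
    simp only [Matrix.mul_assoc, hC]
    rw [hVsV, Matrix.mul_one]
  have h7 : star Uc * P * Vc = Matrix.diagonal gA * C := by
    rw [hP]
    simp only [Matrix.mul_assoc, hC]
    rw [← Matrix.mul_assoc (star Uc) Uc, hUsU, Matrix.one_mul]
  have h8 : star Uc * Q * Vc = C * Matrix.diagonal gB := by
    rw [hQ]
    simp only [Matrix.mul_assoc, hC]
    rw [hVsV, Matrix.mul_one]
  -- real indicators
  set fA : Fin (d+1) → ℝ := fun i => if eigD A ⟨m - 1, hmn⟩ ≤ α i then 1 else 0 with hfAdef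
  set fB : Fin (d+1) → ℝ := fun i => if eigD B ⟨m - 1, hmn⟩ ≤ β i then 1 else 0 with hfBdef
  -- sums
  have normsq : ∀ (r : ℝ) (z : ℂ), ‖(RCLike.ofReal r : ℂ) * z‖^2 = r^2 * ‖z‖^2 := by
    intro r z
    rw [norm_mul, mul_pow, RCLike.norm_ofReal, sq_abs]
  have hSE : ∑ i, ∑ j, ‖E i j‖^2 = ∑ i, ∑ j, (β j - α i)^2 * w i j := by
    rw [← sumSq_conj hA.eigenvectorUnitary hB.eigenvectorUnitary E]
    have hent : ∀ i j, (star Uc * E * Vc) i j = (RCLike.ofReal (β j - α i) : ℂ) * C i j := by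
      intro i j
      have hEBA : star Uc * E * Vc = star Uc * B * Vc - star Uc * A * Vc := by
        have : E = B - A := by rw [hBdef]; abel
        rw [this, Matrix.mul_sub, Matrix.sub_mul]
      rw [hEBA, h5, h6, Matrix.sub_apply, Matrix.mul_diagonal, Matrix.diagonal_mul]
      simp only [Function.comp]
      rw [RCLike.ofReal_sub]
      ring
    refine Finset.sum_congr rfl fun i _ => Finset.sum_congr rfl fun j _ => ?_
    rw [hent i j, normsq]
  have hSPQ : ∑ i, ∑ j, ‖(P - Q) i j‖^2 = ∑ i, ∑ j, (fA i - fB j)^2 * w i j := by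
    rw [← sumSq_conj hA.eigenvectorUnitary hB.eigenvectorUnitary (P - Q)]
    have hent : ∀ i j, (star Uc * (P - Q) * Vc) i j
        = (RCLike.ofReal (fA i - fB j) : ℂ) * C i j := by
      intro i j
      rw [Matrix.mul_sub, Matrix.sub_mul, h7, h8, Matrix.sub_apply, Matrix.mul_diagonal,
        Matrix.diagonal_mul, RCLike.ofReal_sub]
      have e1 : gA i = (RCLike.ofReal (fA i) : ℂ) := by
        rw [hgA, hfAdef]; by_cases h : eigD A ⟨m - 1, hmn⟩ ≤ α i <;> simp [h]
      have e2 : gB j = (RCLike.ofReal (fB j) : ℂ) := by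
        rw [hgB, hfBdef]; by_cases h : eigD B ⟨m - 1, hmn⟩ ≤ β j <;> simp [h]
      rw [e1, e2]; ring
    refine Finset.sum_congr rfl fun i _ => Finset.sum_congr rfl fun j _ => ?_
    rw [hent i j, normsq]
  -- the key inequality
  have hwpos : ∀ i j, 0 ≤ w i j := fun i j => by rw [hw]; positivity
  have hδpos : (0:ℝ) ≤ eigD B ⟨m - 1, hmn⟩ - eigD A ⟨m, hmd⟩ :=
    sub_nonneg.mpr (le_of_lt hcross)
  have hgapkey : ∀ i j, ¬ (eigD A ⟨m - 1, hmn⟩ ≤ α i) → (eigD B ⟨m - 1, hmn⟩ ≤ β j) →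
      eigD B ⟨m - 1, hmn⟩ - eigD A ⟨m, hmd⟩ ≤ β j - α i := by
    intro i j h1 h2
    have h3 : α i ≤ eigD A ⟨m, hmd⟩ := by
      rw [hEA m hmd]
      exact hfA.2 i (by rw [hEA (m-1) hmn] at h1; exact h1)
    linarith
  have hcard : (Finset.univ.filter (fun i => eigD A ⟨m - 1, hmn⟩ ≤ α i)).card
      = (Finset.univ.filter (fun j => eigD B ⟨m - 1, hmn⟩ ≤ β j)).card := by
    rw [hEA (m-1) hmn, hEB (m-1) hmn]
    exact hfA.1.trans hfB.1.symm
  have hkey := dk_key w hwpos hrow hcol α β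
    (fun i => eigD A ⟨m - 1, hmn⟩ ≤ α i) (fun j => eigD B ⟨m - 1, hmn⟩ ≤ β j)
    hcard _ hδpos hgapkey
  -- frobNorm of scaled difference
  have hr : (0:ℝ) ≤ (Real.sqrt m)⁻¹ := by positivity
  have hfrobsmul : frobNorm ((Real.sqrt m)⁻¹ • (P - Q))
      = (Real.sqrt m)⁻¹ * frobNorm (P - Q) := by
    rw [frobNorm, frobNorm]
    have he : ∀ i j, ‖((Real.sqrt m)⁻¹ • (P - Q)) i j‖^2
        = ((Real.sqrt m)⁻¹)^2 * ‖(P - Q) i j‖^2 := by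
      intro i j
      rw [Matrix.smul_apply, norm_smul, mul_pow]
      congr 1
      rw [Real.norm_eq_abs, sq_abs]
    simp_rw [he, ← Finset.mul_sum]
    rw [Real.sqrt_mul (sq_nonneg _), Real.sqrt_sq hr]
  have hsm1 : (Real.sqrt m)⁻¹ ≤ 1 := by
    apply inv_le_one_of_one_le₀
    rw [show (1:ℝ) = Real.sqrt 1 by simp]
    exact Real.sqrt_le_sqrt (by exact_mod_cast hm)
  show (eigD B ⟨m - 1, hmn⟩ - eigD A ⟨m, hmd⟩) * frobNorm (piGr m A - piGr m B)
      ≤ Real.sqrt 2 * frobNorm E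
  calc (eigD B ⟨m - 1, hmn⟩ - eigD A ⟨m, hmd⟩) * frobNorm (piGr m A - piGr m B)
      = (eigD B ⟨m - 1, hmn⟩ - eigD A ⟨m, hmd⟩)
          * ((Real.sqrt m)⁻¹ * frobNorm (P - Q)) := by rw [hdiff, hfrobsmul]
    _ ≤ (eigD B ⟨m - 1, hmn⟩ - eigD A ⟨m, hmd⟩) * (1 * frobNorm (P - Q)) := by
        apply mul_le_mul_of_nonneg_left _ hδpos
        apply mul_le_mul_of_nonneg_right hsm1
        rw [frobNorm]; exact Real.sqrt_nonneg _
    _ = Real.sqrt ((eigD B ⟨m - 1, hmn⟩ - eigD A ⟨m, hmd⟩)^2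
          * ∑ i, ∑ j, ‖(P - Q) i j‖^2) := by
        rw [one_mul, frobNorm, Real.sqrt_mul (sq_nonneg _), Real.sqrt_sq hδpos]
    _ ≤ Real.sqrt (2 * ∑ i, ∑ j, ‖E i j‖^2) := by
        apply Real.sqrt_le_sqrt
        rw [hSPQ, hSE]
        exact hkey
    _ = Real.sqrt 2 * frobNorm E := by
        rw [Real.sqrt_mul (by norm_num : (0:ℝ) ≤ 2), frobNorm]
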